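/- Let d ∈ ℕ, let fₙ : ℝᵈ → ℝ be convex functions converging pointwise to f : ℝᵈ → ℝ, and suppose x* ∈ ℝᵈ satisfies f(x) > f(x*) for all x ≠ x* (unique minimizer). If xₙ is any sequence in ℝᵈ with fₙ(xₙ) ≤ fₙ(x*) for every n, then xₙ → x*. -/

import Mathlib

/-!
Convex functions converging pointwise on an open subset of a finite-dimensional space converge
locally uniformly: near a point `p`, the values at the vertices of a small simplex around `p`
bound `F i` from above on a ball, and reflecting through `p` turns the lower bound `F i p ≈ f p`
into a lower bound on the same ball. Hence `F i > f x₀ + δ ≥ F i x₀` on the sphere of radius `ε`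
around the unique minimizer `x₀` for large `i`, while convexity puts a point of that sphere with
`F i ≤ F i x₀` on the segment from `x₀` to any `x i` with `ε ≤ dist (x i) x₀`.
-/

open Filter Metric Set Topology

section

variable {E : Type*} [NormedAddCommGroup E] [NormedSpace ℝ E]

lemma ConvexOn.two_mul_sub_le {s : Set E} {g : E → ℝ} (hg : ConvexOn ℝ s g) {p y : E}
    (hy : y ∈ s) (hy' : (2 : ℝ) • p - y ∈ s) : 2 * g p - g ((2 : ℝ) • p - y) ≤ g y := by
  have h := hg.2 hy hy' (by norm_num : (0 : ℝ) ≤ 1 / 2) (by norm_num : (0 : ℝ) ≤ 1 / 2)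
    (by norm_num)
  rw [show (1 / 2 : ℝ) • y + (1 / 2 : ℝ) • ((2 : ℝ) • p - y) = p by module, smul_eq_mul,
    smul_eq_mul] at h
  linarith

lemma ConvexOn.exists_mem_sphere_le {s : Set E} {g : E → ℝ} (hg : ConvexOn ℝ s g) {x₀ x : E}
    (hx₀ : x₀ ∈ s) (hx : x ∈ s) {ε : ℝ} (hε : 0 < ε) (hfar : ε ≤ dist x x₀)
    (hgx : g x ≤ g x₀) : ∃ y ∈ sphere x₀ ε, g y ≤ g x₀ := by
  have hd : 0 < dist x₀ x := dist_comm x x₀ ▸ hε.trans_le hfar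
  set t := ε / dist x₀ x
  refine ⟨AffineMap.lineMap x₀ x t, ?_, ?_⟩
  · rw [mem_sphere, dist_lineMap_left, Real.norm_of_nonneg (by positivity),
      div_mul_cancel₀ _ hd.ne']
  · have ht : t ∈ Icc (0 : ℝ) 1 := ⟨by positivity, div_le_one_of_le₀ (dist_comm x x₀ ▸ hfar) hd.le⟩
    exact (hg.le_on_segment hx₀ hx (lineMap_mem_segment ℝ x₀ x ht)).trans (max_le le_rfl hgx)

lemma convexOn_of_tendsto {ι : Type*} {l : Filter ι} [l.NeBot] {s : Set E} {F : ι → E → ℝ}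
    {f : E → ℝ} (hF : ∀ i, ConvexOn ℝ s (F i))
    (hlim : ∀ x ∈ s, Tendsto (fun i => F i x) l (𝓝 (f x))) : ConvexOn ℝ s f := by
  obtain ⟨i₀⟩ := l.nonempty_of_neBot
  refine ⟨(hF i₀).1, fun x hx y hy a b ha hb hab => ?_⟩
  simp only [smul_eq_mul]
  exact le_of_tendsto_of_tendsto' (hlim _ ((hF i₀).1 hx hy ha hb hab))
    (((hlim x hx).const_mul a).add ((hlim y hy).const_mul b)) fun i => (hF i).2 hx hy ha hb hab

variable [FiniteDimensional ℝ E] {ι : Type*} {l : Filter ι} [l.NeBot] {F : ι → E → ℝ} {f : E → ℝ}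

theorem tendstoLocallyUniformlyOn_of_convexOn {s : Set E} (hs : IsOpen s)
    (hF : ∀ i, ConvexOn ℝ s (F i)) (hlim : ∀ x ∈ s, Tendsto (fun i => F i x) l (𝓝 (f x))) :
    TendstoLocallyUniformlyOn F f l s := by
  have hfc : ContinuousOn f s := (convexOn_of_tendsto hF hlim).continuousOn hs
  rw [Metric.tendstoLocallyUniformlyOn_iff]
  intro ε hε p hp
  obtain ⟨δ, hδ, rfl⟩ : ∃ δ > 0, ε = 5 * δ := ⟨ε / 5, by positivity, by ring⟩
  have hU : s ∩ f ⁻¹' ball (f p) δ ∈ 𝓝 p :=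
    inter_mem (hs.mem_nhds hp) ((hfc.continuousAt (hs.mem_nhds hp)).preimage_mem_nhds
      (ball_mem_nhds _ hδ))
  obtain ⟨b, hpb, hbU⟩ := exists_mem_interior_convexHull_affineBasis hU
  obtain ⟨r, hr, hrb⟩ := Metric.isOpen_iff.1 isOpen_interior p hpb
  have hball : ball p r ⊆ s ∩ f ⁻¹' ball (f p) δ := hrb.trans (interior_subset.trans hbU)
  have hbs : range b ⊆ s := fun v hv => (hbU (subset_convexHull ℝ _ hv)).1
  have hvertex : ∀ᶠ i in l, ∀ j, F i (b j) < f p + 2 * δ := by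
    refine eventually_all.2 fun j => (hlim _ (hbs ⟨j, rfl⟩)).eventually (gt_mem_nhds ?_)
    have := (hbU (subset_convexHull ℝ _ ⟨j, rfl⟩)).2
    rw [mem_preimage, mem_ball, Real.dist_eq, abs_lt] at this
    linarith
  have hcentre : ∀ᶠ i in l, f p - δ < F i p := (hlim p hp).eventually (lt_mem_nhds (by linarith))
  refine ⟨ball p r, mem_nhdsWithin_of_mem_nhds (ball_mem_nhds p hr), ?_⟩
  filter_upwards [hvertex, hcentre] with i hvertex hcentre y hy
  have hF_lt : ∀ z ∈ ball p r, F i z < f p + 2 * δ := fun z hz => by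
    obtain ⟨_, ⟨j, rfl⟩, hle⟩ := (hF i).exists_ge_of_mem_convexHull hbs (interior_subset (hrb hz))
    exact hle.trans_lt (hvertex j)
  have hy' : (2 : ℝ) • p - y ∈ ball p r := by
    rwa [mem_ball, dist_eq_norm, show (2 : ℝ) • p - y - p = p - y by module, ← dist_eq_norm,
      dist_comm]
  have hlow := (hF i).two_mul_sub_le (hball hy).1 (hball hy').1
  have hfy := (hball hy).2
  rw [mem_preimage, mem_ball, Real.dist_eq, abs_lt] at hfy
  rw [Real.dist_eq, abs_lt]
  constructor <;> linarith [hF_lt y hy, hF_lt _ hy']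

theorem tendsto_nhds_of_convexOn_of_forall_le {x₀ : E} {x : ι → E}
    (hF : ∀ i, ConvexOn ℝ univ (F i)) (hlim : ∀ y, Tendsto (fun i => F i y) l (𝓝 (f y)))
    (hmin : ∀ y, y ≠ x₀ → f x₀ < f y) (hx : ∀ i, F i (x i) ≤ F i x₀) :
    Tendsto x l (𝓝 x₀) := by
  rw [Metric.tendsto_nhds]
  intro ε hε
  have hS := isCompact_sphere x₀ ε
  have hunif : TendstoUniformlyOn F f l (sphere x₀ ε) :=
    (tendstoLocallyUniformlyOn_iff_tendstoUniformlyOn_of_compact hS).1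
      ((tendstoLocallyUniformlyOn_of_convexOn isOpen_univ hF fun y _ => hlim y).mono
        (subset_univ _))
  obtain ⟨m, hm, hmS⟩ := hS.exists_forall_le'
    ((convexOn_of_tendsto hF fun y _ => hlim y).continuousOn isOpen_univ |>.mono (subset_univ _))
    fun y hy => hmin y (ne_of_mem_sphere hy hε.ne')
  obtain ⟨δ, hδ, rfl⟩ : ∃ δ > 0, m = f x₀ + 2 * δ := ⟨(m - f x₀) / 2, by linarith, by ring⟩
  filter_upwards [Metric.tendstoUniformlyOn_iff.1 hunif δ hδ,
    (hlim x₀).eventually (gt_mem_nhds (by linarith : f x₀ < f x₀ + δ))] with i hclose hcentre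
  by_contra! hfar
  obtain ⟨y, hyS, hy⟩ := (hF i).exists_mem_sphere_le (mem_univ _) (mem_univ _) hε hfar (hx i)
  have := hclose y hyS
  rw [Real.dist_eq, abs_lt] at this
  linarith [hmS y hyS]

end

/-- Argmin consistency for convex criteria: if convex `fₙ → f` pointwise, `x*` is the
unique minimizer of `f`, and `fₙ xₙ ≤ fₙ x*` for all `n`, then `xₙ → x*`. -/
theorem stmt8 (d : ℕ) (f : (EuclideanSpace ℝ (Fin d)) → ℝ)
    (fn : ℕ → (EuclideanSpace ℝ (Fin d)) → ℝ)
    (hconv : ∀ n, ConvexOn ℝ Set.univ (fn n))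
    (hpt : ∀ x, Tendsto (fun n => fn n x) atTop (nhds (f x)))
    (xstar : EuclideanSpace ℝ (Fin d))
    (hmin : ∀ x, x ≠ xstar → f xstar < f x)
    (x : ℕ → EuclideanSpace ℝ (Fin d))
    (hx : ∀ n, fn n (x n) ≤ fn n xstar) :
    Tendsto x atTop (nhds xstar) :=
  tendsto_nhds_of_convexOn_of_forall_le hconv hpt hmin hx
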